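/- arXiv:1903.04318 — 7 statements merged into one kernel-verified Lean document; each statement's English description precedes it below -/
import Mathlib

section
/- If c : X³ → ℤ is a reduced 3-cocycle on a set X (i.e. δc = 0, c(x,x,y) = 0 and c(x,y,y) = 0 for all x,y), and for some r ≥ 2 we have c(x,y,z) ≤ r for all x,y,z and c(x,y,x) = r whenever x ≠ y, then for all distinct x,y,z ∈ X we have c(x,y,z) + c(x,z,y) = r. -/
/-- For a reduced 3-cocycle `c` (ℕ-valued, viewed in ℤ) bounded by `r ≥ 2`
with `c x y x = r` for `x ≠ y`, distinct `x y z` satisfy `c x y z + c x z y = r`. -/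
theorem stmt0 {X : Type*} (c : X → X → X → ℤ)
    (hnn : ∀ x y z : X, 0 ≤ c x y z)
    (hδ : ∀ w x y z : X, c x y z - c w y z + c w x z - c w x y = 0)
    (hred1 : ∀ x y : X, c x x y = 0) (hred2 : ∀ x y : X, c x y y = 0)
    (r : ℤ) (hr : 2 ≤ r)
    (hbound : ∀ x y z : X, c x y z ≤ r)
    (hdeg : ∀ x y : X, x ≠ y → c x y x = r) :
    ∀ x y z : X, x ≠ y → y ≠ z → x ≠ z → c x y z + c x z y = r := by
  have cyc : ∀ a b d : X, a ≠ b → a ≠ d → c a b d = c b d a := by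
    intro a b d hab had
    have h := hδ a b d a
    rw [hdeg a d had, hdeg a b hab] at h
    linarith
  intro x y z hxy hyz hxz
  have h := hδ x y x z
  rw [hred1 x z, hdeg x y hxy] at h
  have h1 : c x z y = c z y x := cyc x z y hxz hxy
  have h2 : c z y x = c y x z := cyc z y x (Ne.symm hyz) (Ne.symm hxz)
  linarith
end

section
/- Let c be a reduced 3-cocycle on X with values in ℕ satisfying c(x,y,z) ≤ r for all x,y,z and c(x,y,x) = r whenever x ≠ y, for some r ≥ 2. Define Δ to be the set of triples (x,y,z) of pairwise distinct elements with c(x,y,z) = r. Then Δ is a partial cyclic order: (a) (x,y,z) ∈ Δ implies (y,z,x) ∈ Δ; (b) (x,y,z) ∈ Δ implies (x,z,y) ∉ Δ; (c) (x,y,z) ∈ Δ and (x,z,w) ∈ Δ imply (x,y,w) ∈ Δ. -/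
/-- the set Δ of triples of pairwise distinct elements with `c x y z = r`
is a partial cyclic order: cyclic invariance, asymmetry, transitivity. -/
theorem stmt1 {X : Type*} (c : X → X → X → ℕ)
    (hδ : ∀ w x y z : X, (c x y z : ℤ) - c w y z + c w x z - c w x y = 0)
    (hred1 : ∀ x y : X, c x x y = 0) (hred2 : ∀ x y : X, c x y y = 0)
    (r : ℕ) (hr : 2 ≤ r)
    (hbound : ∀ x y z : X, c x y z ≤ r)
    (hdeg : ∀ x y : X, x ≠ y → c x y x = r)
    (Δ : X → X → X → Prop)
    (hΔ : ∀ x y z : X, Δ x y z ↔ (x ≠ y ∧ y ≠ z ∧ x ≠ z ∧ c x y z = r)) :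
    (∀ x y z : X, Δ x y z → Δ y z x) ∧
    (∀ x y z : X, Δ x y z → ¬ Δ x z y) ∧
    (∀ x y z w : X, Δ x y z → Δ x z w → Δ x y w) := by
  -- complementarity: if x ≠ y then c x y z + c y x z = r
  have hpair : ∀ x y z : X, x ≠ y → c x y z + c y x z = r := by
    intro x y z hxy
    have h := hδ y x y z
    have h1 := hred1 y z
    have h2 := hdeg y x (Ne.symm hxy)
    omega
  -- cyclic invariance of c on triples with z distinct from x and y
  have hcyc : ∀ x y z : X, x ≠ z → y ≠ z → c x y z = c z x y := by
    intro x y z hxz hyz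
    have h := hδ z x y z
    have h1 := hdeg z y (Ne.symm hyz)
    have h2 := hdeg z x (Ne.symm hxz)
    omega
  refine ⟨?_, ?_, ?_⟩
  · intro x y z h
    rw [hΔ] at h ⊢
    obtain ⟨hxy, hyz, hxz, hc⟩ := h
    refine ⟨hyz, Ne.symm hxz, Ne.symm hxy, ?_⟩
    rw [hcyc y z x (Ne.symm hxy) (Ne.symm hxz)]
    exact hc
  · intro x y z h h'
    rw [hΔ] at h h'
    obtain ⟨hxy, hyz, hxz, hc⟩ := h
    obtain ⟨_, _, _, hc'⟩ := h'
    have e1 : c x z y = c y x z := hcyc x z y hxy (Ne.symm hyz)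
    have e2 := hpair x y z hxy
    omega
  · intro x y z w h h'
    rw [hΔ] at h h' ⊢
    obtain ⟨hxy, hyz, hxz, hc⟩ := h
    obtain ⟨hxz', hzw, hxw, hc'⟩ := h'
    have hyw : y ≠ w := by
      rintro rfl
      have e1 : c x z y = c y x z := hcyc x z y hxy (Ne.symm hyz)
      have e2 := hpair x y z hxy
      omega
    refine ⟨hxy, hyw, hxw, ?_⟩
    have h := hδ x y z w
    have b1 := hbound y z w
    have b2 := hbound x y w
    omega
end

section
/- Reduced cocycles satisfy cyclic invariance in the presence of the constancy condition: if c is a reduced 3-cocycle on X with c(x,y,x) = r for all x ≠ y, then c(x,y,z) = c(y,z,x) for all pairwise distinct x,y,z. -/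
/-- reduced cocycles with `c x y x = r` for `x ≠ y` satisfy cyclic
invariance on pairwise distinct triples: `c x y z = c y z x`. -/
theorem stmt3 {X : Type*} (c : X → X → X → ℕ)
    (hδ : ∀ w x y z : X, (c x y z : ℤ) - c w y z + c w x z - c w x y = 0)
    (hred1 : ∀ x y : X, c x x y = 0) (hred2 : ∀ x y : X, c x y y = 0)
    (r : ℕ) (hr : 2 ≤ r)
    (hdeg : ∀ x y : X, x ≠ y → c x y x = r) :
    ∀ x y z : X, x ≠ y → y ≠ z → x ≠ z → c x y z = c y z x := by
  have key : ∀ x y z : X, x ≠ y → y ≠ z → x ≠ z → c x y z = c z x y := by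
    intro x y z hxy hyz hxz
    have h := hδ z x y z
    rw [hdeg z y hyz.symm, hdeg z x hxz.symm] at h
    have : (c x y z : ℤ) = c z x y := by linarith
    exact_mod_cast this
  intro x y z hxy hyz hxz
  rw [key x y z hxy hyz hxz,
      key z x y (fun h => hxz h.symm) hxy (fun h => hyz h.symm)]
end

section
/- In the setting of Remark 'not all PCOs': suppose c is a reduced 3-cocycle on ℕ bounded by r ≥ 2 with c(x,y,x) = r for x ≠ y, such that c(1,n,n+1) = r for all n ≥ 2 and c(0,n+1,n) > 0 for all n ≥ 2. Then c(0,1,n) > c(0,1,n+1) for all n ≥ 2, i.e. n ↦ c(0,1,n) is strictly decreasing on n ≥ 2. -/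
/-- under the hypotheses of Remark `not all PCOs`,
`n ↦ c 0 1 n` is strictly decreasing for `n ≥ 2`. -/
theorem stmt5 (c : ℕ → ℕ → ℕ → ℕ) (r : ℕ) (hr : 2 ≤ r)
    (hδ : ∀ w x y z : ℕ, (c x y z : ℤ) - c w y z + c w x z - c w x y = 0)
    (hred1 : ∀ x y : ℕ, c x x y = 0) (hred2 : ∀ x y : ℕ, c x y y = 0)
    (hbound : ∀ x y z : ℕ, c x y z ≤ r)
    (hdeg : ∀ x y : ℕ, x ≠ y → c x y x = r)
    (h1 : ∀ n : ℕ, 2 ≤ n → c 1 n (n + 1) = r)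
    (h2 : ∀ n : ℕ, 2 ≤ n → 0 < c 0 (n + 1) n) :
    ∀ n : ℕ, 2 ≤ n → c 0 1 (n + 1) < c 0 1 n := by
  intro n hn
  have e1 := hδ 0 1 n (n + 1)
  have e2 := hδ 0 n (n + 1) n
  have hd : c n (n + 1) n = r := hdeg n (n + 1) (by omega)
  have hnn : c 0 n n = 0 := hred2 0 n
  have h1n := h1 n hn
  have h2n := h2 n hn
  rw [hd, hnn] at e2
  rw [h1n] at e1
  omega
end

section
/- Let P be a ℤ-poset satisfying property (∗): for any a,b ∈ P there is n ∈ ℤ with a < n · b and ¬(a < (n−1) · b). Let X = P/ℤ be the set of ℤ-orbits and π : P → X the projection. Then π : P → X satisfies the three covering-poset axioms: (1) each fiber is order-isomorphic to ℤ; (2) the successor map σ(p) := 1 · p is the smallest element of the orbit of p strictly greater than p, and is an order automorphism; (3) for all a,b ∈ P there exist n,m ∈ ℕ with a ≤ σⁿ(b) ≤ σ^{n+m}(a). -/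
/-- a ℤ-poset `P` satisfying (∗) is a covering poset of its set of
ℤ-orbits: fibers (orbits) are order-isomorphic to ℤ; `σ := act 1` is the successor
within each orbit and an order automorphism; and the cofinality condition holds. -/
theorem stmt9 {P : Type*} [PartialOrder P] (act : ℤ → P → P)
    (hact0 : ∀ a : P, act 0 a = a)
    (hactadd : ∀ (m n : ℤ) (a : P), act (m + n) a = act m (act n a))
    (hmono : ∀ (m n : ℤ) (a b : P), m ≤ n → a ≤ b → act m a ≤ act n b)
    (hstar : ∀ a b : P, ∃ n : ℤ, a < act n b ∧ ¬ a < act (n - 1) b) :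
    (∀ p : P, Nonempty ({q : P // ∃ n : ℤ, act n p = q} ≃o ℤ)) ∧
    (∀ p : P, p < act 1 p ∧
      ∀ q : P, (∃ n : ℤ, act n p = q) → p < q → act 1 p ≤ q) ∧
    (Function.Bijective (act 1) ∧ ∀ a b : P, a ≤ b ↔ act 1 a ≤ act 1 b) ∧
    (∀ a b : P, ∃ n m : ℕ, a ≤ (act 1)^[n] b ∧ (act 1)^[n] b ≤ (act 1)^[n + m] a) := by
  have hsucc : ∀ p : P, p < act 1 p := by
    intro p
    obtain ⟨n, h1, h2⟩ := hstar p p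
    have hn0 : 0 ≤ n - 1 := by
      by_contra h
      push_neg at h
      have hle : act n p ≤ p := by
        have := hmono n 0 p p (by omega) le_rfl
        rwa [hact0] at this
      exact absurd (h1.trans_le hle) (lt_irrefl p)
    have hle : p ≤ act (n - 1) p := by
      have := hmono 0 (n - 1) p p hn0 le_rfl
      rwa [hact0] at this
    have heq : p = act (n - 1) p := by
      rcases hle.lt_or_eq with h | h
      · exact absurd h h2
      · exact h
    have hkey : act n p = act 1 p := by
      calc act n p = act (1 + (n - 1)) p := by ring_nf
        _ = act 1 (act (n - 1) p) := hactadd _ _ _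
        _ = act 1 p := by rw [← heq]
    rwa [hkey] at h1
  have hsmono : ∀ p : P, StrictMono (fun n : ℤ => act n p) := by
    intro p
    apply strictMono_int_of_lt_succ
    intro n
    calc act n p < act 1 (act n p) := hsucc _
      _ = act (1 + n) p := (hactadd 1 n p).symm
      _ = act (n + 1) p := by ring_nf
  have hiter : ∀ (n : ℕ) (x : P), (act 1)^[n] x = act n x := by
    intro n
    induction n with
    | zero => intro x; simp [hact0]
    | succ k ih =>
      intro x
      rw [Function.iterate_succ_apply', ih, ← hactadd]
      congr 1
      push_cast
      ring
  refine ⟨?_, ?_, ⟨?_, ?_⟩, ?_⟩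
  · intro p
    have hfmono : StrictMono (fun n : ℤ => (⟨act n p, n, rfl⟩ : {q : P // ∃ n : ℤ, act n p = q})) := by
      intro m n h
      exact Subtype.mk_lt_mk.mpr (hsmono p h)
    have hfsurj : Function.Surjective (fun n : ℤ => (⟨act n p, n, rfl⟩ : {q : P // ∃ n : ℤ, act n p = q})) := by
      rintro ⟨q, n, hn⟩
      exact ⟨n, Subtype.ext hn⟩
    exact ⟨(StrictMono.orderIsoOfSurjective _ hfmono hfsurj).symm⟩
  · intro p
    refine ⟨hsucc p, ?_⟩
    rintro q ⟨n, rfl⟩ hlt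
    have h0n : (0 : ℤ) < n := by
      have : act 0 p < act n p := by rwa [hact0]
      exact (hsmono p).lt_iff_lt.mp this
    exact hmono 1 n p p (by omega) le_rfl
  · constructor
    · intro a b h
      have : act (-1) (act 1 a) = act (-1) (act 1 b) := by rw [h]
      rwa [← hactadd, ← hactadd, show (-1 : ℤ) + 1 = 0 from by ring, hact0, hact0] at this
    · intro b
      refine ⟨act (-1) b, ?_⟩
      rw [← hactadd, show (1 : ℤ) + -1 = 0 from by ring, hact0]
  · intro a b
    constructor
    · exact fun h => hmono 1 1 a b le_rfl h
    · intro h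
      have := hmono (-1) (-1) _ _ le_rfl h
      rwa [← hactadd, ← hactadd, show (-1 : ℤ) + 1 = 0 from by ring, hact0, hact0] at this
  · intro a b
    obtain ⟨k, hk, -⟩ := hstar a b
    obtain ⟨j, hj, -⟩ := hstar b a
    refine ⟨k.toNat, j.toNat, ?_, ?_⟩
    · rw [hiter]
      exact le_of_lt (hk.trans_le (hmono k k.toNat b b (Int.self_le_toNat k) le_rfl))
    · rw [hiter, hiter]
      calc act (k.toNat : ℤ) b ≤ act (k.toNat : ℤ) (act j a) :=
            hmono _ _ b (act j a) le_rfl hj.le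
        _ = act ((k.toNat : ℤ) + j) a := (hactadd _ _ _).symm
        _ ≤ act ((k.toNat + j.toNat : ℕ) : ℤ) a := by
            apply hmono _ _ a a _ le_rfl
            push_cast
            have := Int.self_le_toNat j
            omega
end

section
/- Let (X, c) be a cyclic poset with associated covering poset X̃, shift σ and section λ, and let b(x,y) be the smallest n such that λ(x) ≤ σⁿλ(y). If c(x,y,x) = b(x,y) + b(y,x) = 0 for some x ≠ y in X, then there exist distinct elements u, v ∈ X̃ with u ≤ v and v ≤ u, i.e. the preorder on X̃ is not antisymmetric. -/
/-- if `b x y + b y x = 0` for some `x ≠ y` (degenerate cocycle),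
then the preorder on the covering poset is not antisymmetric: there are distinct
`u v` with `u ≤ v` and `v ≤ u`. -/
theorem stmt10 {X X' : Type*} [Preorder X'] (π : X' → X)
    (σ : X' ≃o X') (lam : X → X')
    (hsec : ∀ x : X, π (lam x) = x)
    (hσfib : ∀ a : X', π (σ a) = π a)
    (b : X → X → ℤ)
    (hb1 : ∀ x y : X, lam x ≤ (σ ^ (b x y)) (lam y))
    (hb2 : ∀ (x y : X) (n : ℤ), lam x ≤ (σ ^ n) (lam y) → b x y ≤ n)
    (x y : X) (hxy : x ≠ y) (h0 : b x y + b y x = 0) :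
    ∃ u v : X', u ≠ v ∧ u ≤ v ∧ v ≤ u := by
  have hfib : ∀ (n : ℤ) (a : X'), π ((σ ^ n) a) = π a := by
    intro n
    induction n using Int.induction_on with
    | zero => intro a; simp
    | succ k ih =>
        intro a
        have h1 : (σ ^ ((k : ℤ) + 1)) a = (σ ^ (k : ℤ)) (σ a) := by
          rw [zpow_add_one]; rfl
        rw [h1, ih, hσfib]
    | pred k ih =>
        intro a
        have h1 : (σ ^ (-(k : ℤ) - 1)) a = (σ ^ (-(k : ℤ))) (σ⁻¹ a) := by
          rw [zpow_sub_one]; rfl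
        have h2 : π (σ⁻¹ a) = π a := by
          have := hσfib (σ⁻¹ a)
          simpa using this.symm
        rw [h1, ih, h2]
  refine ⟨lam x, (σ ^ (b x y)) (lam y), ?_, hb1 x y, ?_⟩
  · intro h
    apply hxy
    have := hfib (b x y) (lam y)
    rw [← h, hsec, hsec] at this
    exact this
  · have h := hb1 y x
    have hneg : b y x = -(b x y) := by omega
    rw [hneg] at h
    have := (σ ^ (b x y)).monotone h
    have heq : (σ ^ (b x y)) ((σ ^ (-(b x y))) (lam x)) = lam x := by
      have : ((σ ^ (b x y)) * (σ ^ (-(b x y)))) (lam x) = lam x := by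
        rw [← zpow_add]; simp
      simpa using this
    rwa [heq] at this
end

section
/- Let Z ⊂ S¹ be finite and ρ a noncrossing equivalence relation on Z. Then the relation on points of the disk's boundary circle defined by 'x and y are ρ-noncrossing' (the geodesic from x to y crosses no geodesic joining two ρ-equivalent points of Z) is an equivalence relation on S¹ \ Z, and it has finitely many equivalence classes. -/
/-- Two chords of the circle (a cyclically ordered set) `{x,y}` and `{a,b}` cross if
one of `a,b` lies strictly inside each of the two open arcs determined by `x,y`. -/
def Crossing {α : Type*} [CircularOrder α] (x y a b : α) : Prop :=
  (sbtw x a y ∧ sbtw y b x) ∨ (sbtw x b y ∧ sbtw y a x)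

section helpers
variable {α : Type*} [CircularOrder α]

lemma sbtw_ne₁ {a b c : α} (h : sbtw a b c) : a ≠ b := fun e => sbtw_irrefl_left (e ▸ h)
lemma sbtw_ne₂ {a b c : α} (h : sbtw a b c) : b ≠ c := fun e => sbtw_irrefl_right (e ▸ h)
lemma sbtw_ne₃ {a b c : α} (h : sbtw a b c) : c ≠ a := fun e => sbtw_irrefl_left_right (e ▸ h)

/-- From `a b c` and `a c d` in cyclic order, deduce `b c d`. -/
lemma sbtw_mid {a b c d : α} (h1 : sbtw a b c) (h2 : sbtw a c d) : sbtw b c d :=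
  (sbtw_trans_right h2.cyclic_left h1.cyclic_right).cyclic_right

/-- From `a b c` and `c d a` in cyclic order, deduce `b c d`. -/
lemma sbtw_mid' {a b c d : α} (h1 : sbtw a b c) (h2 : sbtw c d a) : sbtw b c d :=
  sbtw_mid h1 h2.cyclic_right

lemma sbtw_total {a b c : α} (hab : a ≠ b) (hbc : b ≠ c) (hca : c ≠ a) :
    sbtw a b c ∨ sbtw c b a := by
  rcases btw_total a b c with h | h
  · by_cases h' : btw c b a
    · rcases btw_antisymm h h' with e | e | e <;> [exact absurd e hab; exact absurd e hbc;
        exact absurd e hca]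
    · exact Or.inl (sbtw_of_btw_not_btw h h')
  · by_cases h' : btw a b c
    · rcases btw_antisymm h' h with e | e | e <;> [exact absurd e hab; exact absurd e hbc;
        exact absurd e hca]
    · exact Or.inr (sbtw_of_btw_not_btw h h')

lemma crossing_symm {x y a b : α} (h : Crossing x y a b) : Crossing y x a b :=
  h.elim (fun ⟨h1, h2⟩ => Or.inr ⟨h2, h1⟩) fun ⟨h1, h2⟩ => Or.inl ⟨h2, h1⟩

lemma crossing_swap {x y a b : α} (h : Crossing x y a b) : Crossing x y b a :=
  h.elim Or.inr Or.inl

/-- If the chord `xz` crosses `ww'` (in the configuration `x w z w'`) and `y` is any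
point distinct from `w` and `w'`, then one of the chords `xy`, `yz` crosses `ww'`. -/
lemma cross_split {x y z w w' : α} (h1 : sbtw x w z) (h2 : sbtw z w' x)
    (hyw : y ≠ w) (hyw' : y ≠ w') :
    Crossing x y w w' ∨ Crossing y z w w' := by
  by_cases hyx : y = x
  · exact Or.inr (hyx ▸ Or.inl ⟨h1, h2⟩)
  by_cases hyz : y = z
  · exact Or.inl (hyz ▸ Or.inl ⟨h1, h2⟩)
  -- locate y relative to the arc (x, z)
  rcases sbtw_total (Ne.symm hyx) hyz (sbtw_ne₃ h1) with hy | hy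
  · -- y on the arc from x to z
    rcases sbtw_total (sbtw_ne₁ h1) (Ne.symm hyw) hyx with hw | hw
    · -- x w y : chord x y crosses
      refine Or.inl (Or.inl ⟨hw, ?_⟩)
      exact sbtw_trans_left hy.cyclic_left h2
    · -- y w x : chord y z crosses
      refine Or.inr (Or.inl ⟨?_, ?_⟩)
      · exact (sbtw_trans_right h1.cyclic_left hw.cyclic_left).cyclic_right
      · exact sbtw_trans_right h2 hy.cyclic_right
  · -- y on the arc from z to x
    rcases sbtw_total (sbtw_ne₁ h2) (Ne.symm hyw') hyz with hw' | hw'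
    · -- z w' y : chord y z crosses
      refine Or.inr (Or.inl ⟨?_, hw'⟩)
      exact sbtw_trans_left hy.cyclic_left h1
    · -- y w' z : chord x y crosses
      refine Or.inl (Or.inl ⟨?_, ?_⟩)
      · exact sbtw_trans_right h1 hy.cyclic_right
      · exact (sbtw_trans_right h2.cyclic_left hw'.cyclic_left).cyclic_right

end helpers

/-- for `Z` finite and `ρ` a noncrossing equivalence relation on `Z`,
the relation "the chord from `x` to `y` crosses no chord joining ρ-equivalent points
of `Z`" is an equivalence relation on `S¹ \ Z` with finitely many classes. -/
theorem stmt14 {α : Type*} [CircularOrder α] (Z : Set α) (hZfin : Z.Finite)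
    (r : α → α → Prop)
    (hrrefl : ∀ a ∈ Z, r a a)
    (hrsymm : ∀ a b : α, r a b → r b a)
    (hrtrans : ∀ a b c : α, r a b → r b c → r a c)
    (hnc : ∀ a b c d : α, a ∈ Z → b ∈ Z → c ∈ Z → d ∈ Z →
      r a c → r b d → Crossing a c b d → (r a b ∧ r b c ∧ r c d)) :
    (∀ x : α, x ∉ Z →
      (∀ w ∈ Z, ∀ w' ∈ Z, r w w' → ¬ Crossing x x w w')) ∧
    (∀ x y : α, x ∉ Z → y ∉ Z →
      (∀ w ∈ Z, ∀ w' ∈ Z, r w w' → ¬ Crossing x y w w') →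
      (∀ w ∈ Z, ∀ w' ∈ Z, r w w' → ¬ Crossing y x w w')) ∧
    (∀ x y z : α, x ∉ Z → y ∉ Z → z ∉ Z →
      (∀ w ∈ Z, ∀ w' ∈ Z, r w w' → ¬ Crossing x y w w') →
      (∀ w ∈ Z, ∀ w' ∈ Z, r w w' → ¬ Crossing y z w w') →
      (∀ w ∈ Z, ∀ w' ∈ Z, r w w' → ¬ Crossing x z w w')) ∧
    Set.Finite {C : Set α | ∃ x : α, x ∉ Z ∧
      C = {y : α | y ∉ Z ∧ ∀ w ∈ Z, ∀ w' ∈ Z, r w w' → ¬ Crossing x y w w'}} := by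
  classical
  have refl' : ∀ x : α, x ∉ Z →
      (∀ w ∈ Z, ∀ w' ∈ Z, r w w' → ¬ Crossing x x w w') := by
    rintro x _ w _ w' _ _ (⟨h, _⟩ | ⟨h, _⟩) <;> exact sbtw_irrefl_left_right h
  have symm' : ∀ x y : α, x ∉ Z → y ∉ Z →
      (∀ w ∈ Z, ∀ w' ∈ Z, r w w' → ¬ Crossing x y w w') →
      (∀ w ∈ Z, ∀ w' ∈ Z, r w w' → ¬ Crossing y x w w') := by
    intro x y _ _ h w hw w' hw' hr hc
    exact h w hw w' hw' hr (crossing_symm hc)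
  have trans' : ∀ x y z : α, x ∉ Z → y ∉ Z → z ∉ Z →
      (∀ w ∈ Z, ∀ w' ∈ Z, r w w' → ¬ Crossing x y w w') →
      (∀ w ∈ Z, ∀ w' ∈ Z, r w w' → ¬ Crossing y z w w') →
      (∀ w ∈ Z, ∀ w' ∈ Z, r w w' → ¬ Crossing x z w w') := by
    intro x y z _ hy _ hxy hyz w hw w' hw' hr hc
    have hyw : y ≠ w := fun e => hy (e ▸ hw)
    have hyw' : y ≠ w' := fun e => hy (e ▸ hw')
    rcases hc with ⟨h1, h2⟩ | ⟨h1, h2⟩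
    · rcases cross_split h1 h2 hyw hyw' with h | h
      · exact hxy w hw w' hw' hr h
      · exact hyz w hw w' hw' hr h
    · rcases cross_split h1 h2 hyw' hyw with h | h
      · exact hxy w hw w' hw' hr (crossing_swap h)
      · exact hyz w hw w' hw' hr (crossing_swap h)
  refine ⟨refl', symm', trans', ?_⟩
  -- Finiteness of the set of classes
  set g : α → Set α := fun x =>
    {y : α | y ∉ Z ∧ ∀ w ∈ Z, ∀ w' ∈ Z, r w w' → ¬ Crossing x y w w'} with hg
  set T : α → Set (α × α) := fun x => {p | p.1 ∈ Z ∧ p.2 ∈ Z ∧ sbtw p.1 x p.2} with hT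
  -- if two points have equal T-data, their chord crosses no chord of Z at all
  have keyN : ∀ x x' : α, T x = T x' → ∀ w ∈ Z, ∀ w' ∈ Z, ¬ Crossing x x' w w' := by
    intro x x' hTeq w hw w' hw' hc
    have main : ∀ a b : α, a ∈ Z → b ∈ Z → sbtw x a x' → sbtw x' b x → False := by
      intro a b ha hb h1 h2
      -- cyclic order x a x' b : (b, a) ∈ T x but not T x'
      have hmem : (b, a) ∈ T x := ⟨hb, ha, sbtw_mid' h2 h1⟩
      have hmem' : (b, a) ∈ T x' := hTeq ▸ hmem
      exact sbtw_asymm (sbtw_mid' h1 h2) hmem'.2.2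
    rcases hc with ⟨h1, h2⟩ | ⟨h1, h2⟩
    · exact main w w' hw hw' h1 h2
    · exact main w' w hw' hw h1 h2
  -- equal T-data forces equal classes
  have keyC : ∀ x x' : α, x ∉ Z → x' ∉ Z → T x = T x' → g x = g x' := by
    intro x x' hx hx' hTeq
    have hN : ∀ w ∈ Z, ∀ w' ∈ Z, r w w' → ¬ Crossing x x' w w' :=
      fun w hw w' hw' _ => keyN x x' hTeq w hw w' hw'
    have hN' : ∀ w ∈ Z, ∀ w' ∈ Z, r w w' → ¬ Crossing x' x w w' := symm' x x' hx hx' hN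
    ext y
    constructor
    · rintro ⟨hy, hxy⟩
      exact ⟨hy, trans' x' x y hx' hx hy hN' hxy⟩
    · rintro ⟨hy, hx'y⟩
      exact ⟨hy, trans' x x' y hx hx' hy hN hx'y⟩
  -- now inject the class set into the (finite) set of subsets of Z ×ˢ Z
  have hTsub : ∀ x : α, T x ⊆ Z ×ˢ Z := by
    rintro x ⟨a, b⟩ ⟨ha, hb, _⟩
    exact ⟨ha, hb⟩
  have hfin : Set.Finite {s : Set (α × α) | s ⊆ Z ×ˢ Z} :=
    Set.Finite.finite_subsets (hZfin.prod hZfin)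
  set h : Set (α × α) → Set α := fun s =>
    if hs : ∃ x, x ∉ Z ∧ T x = s then g hs.choose else ∅ with hh
  have hsub : {C : Set α | ∃ x : α, x ∉ Z ∧ C = g x} ⊆ h '' {s : Set (α × α) | s ⊆ Z ×ˢ Z} := by
    rintro C ⟨x, hx, rfl⟩
    refine ⟨T x, hTsub x, ?_⟩
    have hex : ∃ x', x' ∉ Z ∧ T x' = T x := ⟨x, hx, rfl⟩
    simp only [hh, dif_pos hex]
    exact keyC _ _ hex.choose_spec.1 hx hex.choose_spec.2
  exact Set.Finite.subset (hfin.image h) hsub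
end
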